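/- arXiv:math/0209138 — 8 statements merged into one kernel-verified Lean document; each statement's English description precedes it below -/
import Mathlib

section
/- Let α be a type with decidable equality, let v ∈ FreeGroup α be cyclically reduced, and suppose v = w^n for some w ∈ FreeGroup α and some integer n ≥ 1. Then w is cyclically reduced, and the reduced word of v is the concatenation of n copies of the reduced word of w. -/
/-!
Write the reduced word of `w` as `C ++ R ++ invRev C`, with `R` its cyclic reduction and `C` the
conjugator. For `m ≥ 1` the reduced word of `w ^ m` is `C ++ Rᵐ ++ invRev C`, where `Rᵐ` is `m`
copies of `R` (`reduceCyclically.reduce_flatten_replicate`). If `C` were nonempty, this word would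
begin with a letter and end with its inverse, so it would not be cyclically reduced. Hence `C` is
empty, `w.toWord = R` is cyclically reduced and `v.toWord = Rᵐ`.
-/

/-- An element of a free group is cyclically reduced if its reduced word is empty or
its last letter is not the inverse of its first letter. -/
def CyclicallyReduced {α : Type*} [DecidableEq α] (g : FreeGroup α) : Prop :=
  ∀ x ∈ g.toWord.head?, ∀ y ∈ g.toWord.getLast?, y ≠ (x.1, !x.2)

namespace FreeGroup

variable {α : Type*}

theorem cyclicallyReduced_iff_isCyclicallyReduced_toWord [DecidableEq α] {g : FreeGroup α} :
    CyclicallyReduced g ↔ IsCyclicallyReduced g.toWord := by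
  simp only [CyclicallyReduced, isCyclicallyReduced_iff, isReduced_toWord, true_and]
  constructor
  · intro h y hy x hx h1
    by_contra h2
    exact h x hx y hy (Prod.ext h1 (Bool.eq_not.2 h2))
  · rintro h x hx y hy rfl
    simpa using h _ hy x hx rfl

theorem eq_nil_of_isCyclicallyReduced_append_invRev {C M : List (α × Bool)}
    (h : IsCyclicallyReduced (C ++ M ++ invRev C)) : C = [] := by
  obtain _ | ⟨a, C'⟩ := C
  · rfl
  · have hlast : (a.1, !a.2) ∈ ((a :: C') ++ M ++ invRev (a :: C')).getLast? := by
      rw [invRev_cons, ← List.append_assoc]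
      exact List.getLast?_concat ..
    simpa using h.2 _ hlast a (by simp) rfl

namespace reduceCyclically

variable [DecidableEq α] {L : List (α × Bool)}

theorem eq_self_of_conjugator_eq_nil (h : conjugator L = []) : reduceCyclically L = L := by
  simpa [h] using conj_conjugator_reduceCyclically L

theorem conjugator_eq_nil_of_isCyclicallyReduced_reduce_flatten_replicate (hL : IsReduced L)
    {n : ℕ} (hn : n ≠ 0) (h : IsCyclicallyReduced (reduce (List.replicate n L).flatten)) :
    conjugator L = [] := by
  rw [reduce_flatten_replicate hL, if_neg hn] at h
  exact eq_nil_of_isCyclicallyReduced_append_invRev h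

end reduceCyclically

end FreeGroup

/-- If `v` is cyclically reduced and `v = w ^ n` with `n ≥ 1`, then `w` is cyclically
reduced and the reduced word of `v` is the concatenation of `n` copies of that of `w`. -/
theorem stmt_1 {α : Type*} [DecidableEq α] (v w : FreeGroup α) (n : ℤ) (hn : 1 ≤ n)
    (hv : CyclicallyReduced v) (hvw : v = w ^ n) :
    CyclicallyReduced w ∧ v.toWord = (List.replicate n.toNat w.toWord).flatten := by
  have hm : n.toNat ≠ 0 := by omega
  have hv_word : v.toWord = FreeGroup.reduce (List.replicate n.toNat w.toWord).flatten := by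
    rw [hvw, ← Int.toNat_of_nonneg (by omega : 0 ≤ n), zpow_natCast, FreeGroup.toWord_pow,
      Int.toNat_natCast]
  have hw_red := FreeGroup.isReduced_toWord (x := w)
  rw [FreeGroup.cyclicallyReduced_iff_isCyclicallyReduced_toWord, hv_word] at hv
  have hC :=
    FreeGroup.reduceCyclically.conjugator_eq_nil_of_isCyclicallyReduced_reduce_flatten_replicate
      hw_red hm hv
  have hR := FreeGroup.reduceCyclically.eq_self_of_conjugator_eq_nil hC
  refine ⟨FreeGroup.cyclicallyReduced_iff_isCyclicallyReduced_toWord.2 ?_, ?_⟩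
  · simpa [hR] using FreeGroup.reduceCyclically.isCyclicallyReduced hw_red
  · simp [hv_word, FreeGroup.reduceCyclically.reduce_flatten_replicate hw_red, hm, hC, hR]
end

section
/- Let α be a type with decidable equality and let v ∈ FreeGroup α be cyclically reduced. If some letter occurs exactly once in the reduced word of v, then v is not a proper power: there is no w ∈ FreeGroup α and integer k ≥ 2 with v = w^k. -/
/-!
Write the reduced word of `w` as `P ++ C ++ invRev P` with `C` cyclically reduced. For `k ≠ 0` the
reduced word of `w ^ k` is `P ++ C ++ ⋯ ++ C ++ invRev P` (`k` copies of `C`), and if `w ^ k` is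
cyclically reduced then `P` must be empty, since its first letter and the last letter of
`invRev P` are mutually inverse. So every letter occurs in the reduced word of `w ^ k` a multiple
of `k` times, and a letter occurring exactly once forces `k = 1`.
-/

section

open FreeGroup FreeGroup.reduceCyclically List

variable {α : Type*} [DecidableEq α]

theorem FreeGroup.toWord_pow_of_ne_zero (w : FreeGroup α) {n : ℕ} (hn : n ≠ 0) :
    (w ^ n).toWord = conjugator w.toWord ++
      (replicate n (reduceCyclically w.toWord)).flatten ++ invRev (conjugator w.toWord) := by
  rw [toWord_pow, reduce_flatten_replicate isReduced_toWord, if_neg hn]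

theorem CyclicallyReduced.eq_nil_of_toWord_eq_append_invRev {g : FreeGroup α}
    (hg : CyclicallyReduced g) {P M : List (α × Bool)} (h : g.toWord = P ++ M ++ invRev P) :
    P = [] := by
  obtain _ | ⟨x, P⟩ := P
  · rfl
  · refine absurd rfl (hg x ?_ (x.1, !x.2) ?_)
    · simp [h]
    · rw [h, getLast?_append_of_ne_nil _ (by simp [invRev])]
      simp [invRev]

theorem CyclicallyReduced.count_toWord_pow (ℓ : α × Bool) {w : FreeGroup α} {n : ℕ}
    (hn : n ≠ 0) (hw : CyclicallyReduced (w ^ n)) :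
    (w ^ n).toWord.count ℓ = n * (reduceCyclically w.toWord).count ℓ := by
  have hword := w.toWord_pow_of_ne_zero hn
  rw [hword, hw.eq_nil_of_toWord_eq_append_invRev hword]
  simp [count_flatten]

end

/-- If `v` is cyclically reduced and some letter occurs exactly once in its reduced word,
then `v` is not a proper power. -/
theorem stmt_3 {α : Type*} [DecidableEq α] (v : FreeGroup α)
    (hv : CyclicallyReduced v) (ℓ : α × Bool) (hℓ : v.toWord.count ℓ = 1) :
    ¬ ∃ (w : FreeGroup α) (k : ℤ), 2 ≤ k ∧ v = w ^ k := by
  rintro ⟨w, k, hk, rfl⟩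
  lift k to ℕ using by omega
  rw [zpow_natCast] at hv hℓ
  rw [hv.count_toWord_pow ℓ (by omega)] at hℓ
  have hk_one : k = 1 := Nat.eq_one_of_mul_eq_one_right hℓ
  omega
end

section
/- For all integers p, q ≥ 2 and n ≥ 1, none of the following three elements of F₂ is a proper power: w₁ = a^{-(p+1)} · b; w₂ = (a·b⁻¹·a⁻¹·b)^n · b^q · (b·a⁻¹·b⁻¹·a)^n · a^{p+1}; w₃ = b⁻¹ · (a⁻¹·b·a·b⁻¹)^n · b^{-q} · (b⁻¹·a·b·a⁻¹)^n. (These are the elements λμ⁻¹, νλ⁻¹ and μν⁻¹ of F₂ = π₁ of the handlebody complementary to the Seifert surface, arising from the first once-punctured torus for the knot K_n of Figure 3, where λ = a^{-(p+1)}, μ = b⁻¹, ν = (a·b⁻¹·a⁻¹·b)^n · b^q · (b·a⁻¹·b⁻¹·a)^n.) -/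
/-!
If a representation `ρ : F₂ → Aff(ℂ)` sends `w` to `z ↦ u z + c` with `u ≠ 1` a `k`-th root of
unity, then `ρ w` is a rotation about its fixed point and `ρ (w ^ k) = 1`. Let the linear part of
`ρ` be `ζ ^ e` for a weighted exponent sum `e`, with `ζ` a primitive `N`-th root of unity where
`N = |e g|`. If `g = w ^ k`, then `e w = e g / k`, so `u = ζ ^ (e w)` is such a root and `ρ g = 1`.
For `νλ⁻¹` take `a ↦ ζ z`, `b ↦ z + 1` and `N = p + 1`; for `μν⁻¹` take `a ↦ ζ z + 1`, `b ↦ ζ z`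
and `N = q + 1`. In both cases `ρ g` is translation by a nonzero number, `q + n |1 - ζ|²` resp.
`-n (1 - ζ⁻¹)²`. For `λμ⁻¹` the exponent sum of `b` is `1`, which no `k ≥ 2` divides.
-/

/-- The generator `a` of the free group on two generators. -/
def a : FreeGroup (Fin 2) := FreeGroup.of 0

/-- The generator `b` of the free group on two generators. -/
def b : FreeGroup (Fin 2) := FreeGroup.of 1

/-- An element of the free group on two generators is a proper power if it is a `k`-th
power for some integer `k ≥ 2`. -/
def IsProperPower (g : FreeGroup (Fin 2)) : Prop :=
  ∃ (w : FreeGroup (Fin 2)) (k : ℤ), 2 ≤ k ∧ g = w ^ k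

open Finset Multiplicative

/-- `⟨u, c⟩` stands for the affine map `z ↦ u * z + c`; the product is composition. -/
@[ext]
structure AffGroup (R : Type*) [CommRing R] where
  scale : Rˣ
  shift : R

namespace AffGroup

variable {R : Type*} [CommRing R]

instance : Mul (AffGroup R) := ⟨fun f g => ⟨f.scale * g.scale, f.shift + f.scale * g.shift⟩⟩
instance : One (AffGroup R) := ⟨⟨1, 0⟩⟩
instance : Inv (AffGroup R) := ⟨fun f => ⟨f.scale⁻¹, -(f.scale⁻¹ * f.shift)⟩⟩

@[simp] lemma mul_scale (f g : AffGroup R) : (f * g).scale = f.scale * g.scale := rfl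
@[simp] lemma mul_shift (f g : AffGroup R) : (f * g).shift = f.shift + f.scale * g.shift := rfl
@[simp] lemma one_scale : (1 : AffGroup R).scale = 1 := rfl
@[simp] lemma one_shift : (1 : AffGroup R).shift = 0 := rfl
@[simp] lemma inv_scale (f : AffGroup R) : f⁻¹.scale = f.scale⁻¹ := rfl
@[simp] lemma inv_shift (f : AffGroup R) : f⁻¹.shift = -(f.scale⁻¹ * f.shift) := rfl

instance : Group (AffGroup R) where
  mul_assoc f g h := by ext <;> simp <;> ring
  one_mul f := by ext <;> simp
  mul_one f := by ext <;> simp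
  inv_mul_cancel f := by ext <;> simp

def scaleHom : AffGroup R →* Rˣ where
  toFun := scale
  map_one' := rfl
  map_mul' _ _ := rfl

@[simp] lemma scaleHom_apply (f : AffGroup R) : scaleHom f = f.scale := rfl

@[simp] lemma pow_scale (f : AffGroup R) (k : ℕ) : (f ^ k).scale = f.scale ^ k :=
  map_pow scaleHom f k

lemma pow_shift (f : AffGroup R) (k : ℕ) :
    (f ^ k).shift = (∑ i ∈ range k, (f.scale : R) ^ i) * f.shift := by
  induction k with
  | zero => simp
  | succ k ih => rw [pow_succ, mul_shift, ih, pow_scale, sum_range_succ]; push_cast; ring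

lemma pow_eq_one_of_scale_pow_eq_one [IsDomain R] {f : AffGroup R} {k : ℕ}
    (hk : f.scale ^ k = 1) (h1 : f.scale ≠ 1) : f ^ k = 1 := by
  have hsum : ∑ i ∈ range k, (f.scale : R) ^ i = 0 := by
    have h := geom_sum_mul (f.scale : R) k
    rw [← Units.val_pow_eq_pow_val, hk, Units.val_one, sub_self] at h
    exact (mul_eq_zero.1 h).resolve_right (sub_ne_zero.2 (Units.val_eq_one.not.2 h1))
  exact AffGroup.ext (by rw [pow_scale, hk, one_scale])
    (by rw [pow_shift, hsum, zero_mul, one_shift])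

def dilation : Rˣ →* AffGroup R where
  toFun u := ⟨u, 0⟩
  map_one' := rfl
  map_mul' _ _ := by ext <;> simp

def translation (c : R) : AffGroup R := ⟨1, c⟩

@[simp] lemma dilation_scale (u : Rˣ) : (dilation u).scale = u := rfl
@[simp] lemma dilation_shift (u : Rˣ) : (dilation u : AffGroup R).shift = 0 := rfl
@[simp] lemma translation_scale (c : R) : (translation c).scale = 1 := rfl
@[simp] lemma translation_shift (c : R) : (translation c).shift = c := rfl

lemma dilation_zpow (u : Rˣ) (m : ℤ) : dilation u ^ m = dilation (u ^ m) := (map_zpow _ _ _).symm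

lemma translation_zpow (c : R) (m : ℤ) : translation c ^ m = translation (m * c) := by
  induction m using Int.induction_on with
  | zero => ext <;> simp
  | succ m ih => rw [zpow_add_one, ih]; ext <;> simp; ring
  | pred m ih => rw [zpow_sub_one, ih]; ext <;> simp; ring

end AffGroup

open AffGroup

lemma IsPrimitiveRoot.zpow_ne_one_of_abs_mul_eq {G : Type*} [CommGroup G] {ζ : G} {N : ℕ}
    (hζ : IsPrimitiveRoot ζ N) (hN : 0 < N) {k m : ℤ} (hk : 2 ≤ k) (hkm : |k * m| = N) :
    ζ ^ m ≠ 1 := by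
  rw [Ne, hζ.zpow_eq_one_iff_dvd]
  rintro ⟨c, rfl⟩
  rw [abs_mul, abs_mul, abs_of_pos (by omega : 0 < k), Nat.abs_cast] at hkm
  have hkc : k * |c| = 1 := by
    apply mul_left_cancel₀ (by exact_mod_cast hN.ne' : (N : ℤ) ≠ 0)
    linarith
  have := Int.le_of_dvd one_pos ⟨_, hkc.symm⟩
  omega

lemma Complex.exists_isPrimitiveRoot_units (N : ℕ) (hN : 0 < N) :
    ∃ ζ : ℂˣ, IsPrimitiveRoot ζ N :=
  ⟨_, (Complex.isPrimitiveRoot_exp N hN.ne').isUnit_unit hN.ne'⟩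

lemma not_isProperPower_of_toAdd_eq_one (e : FreeGroup (Fin 2) →* Multiplicative ℤ)
    {g : FreeGroup (Fin 2)} (he : (e g).toAdd = 1) : ¬ IsProperPower g := by
  rintro ⟨w, k, hk, rfl⟩
  rw [map_zpow, toAdd_zpow, smul_eq_mul] at he
  have := Int.le_of_dvd one_pos ⟨_, he.symm⟩
  omega

theorem not_isProperPower_of_affGroup {R : Type*} [CommRing R] [IsDomain R]
    (φ : FreeGroup (Fin 2) →* AffGroup R) (e : FreeGroup (Fin 2) →* Multiplicative ℤ)
    {ζ : Rˣ} {N : ℕ} (hζ : IsPrimitiveRoot ζ N) (hN : 0 < N)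
    (hφ : scaleHom.comp φ = (zpowersHom Rˣ ζ).comp e)
    {g : FreeGroup (Fin 2)} (he : |(e g).toAdd| = N) (hshift : (φ g).shift ≠ 0) :
    ¬ IsProperPower g := by
  rintro ⟨w, k, hk, rfl⟩
  have hscale : (φ w).scale = ζ ^ (e w).toAdd := DFunLike.congr_fun hφ w
  rw [map_zpow, toAdd_zpow, smul_eq_mul] at he
  have hroot : (ζ ^ (e w).toAdd) ^ k = 1 := by
    rw [← zpow_mul, mul_comm, hζ.zpow_eq_one_iff_dvd, ← he]
    exact abs_dvd_self _
  lift k to ℕ using (by omega)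
  have htriv : φ w ^ k = 1 :=
    pow_eq_one_of_scale_pow_eq_one (by rw [hscale, ← zpow_natCast, hroot])
      (hscale ▸ hζ.zpow_ne_one_of_abs_mul_eq hN hk he)
  exact hshift (by rw [map_zpow, zpow_natCast, htriv, one_shift])

def expSum (s t : ℤ) : FreeGroup (Fin 2) →* Multiplicative ℤ :=
  FreeGroup.lift ![ofAdd s, ofAdd t]

@[simp] lemma expSum_a (s t : ℤ) : expSum s t a = ofAdd s := by simp [expSum, a]
@[simp] lemma expSum_b (s t : ℤ) : expSum s t b = ofAdd t := by simp [expSum, b]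

section AffRep

variable {R : Type*} [CommRing R]

def affRep (f g : AffGroup R) : FreeGroup (Fin 2) →* AffGroup R := FreeGroup.lift ![f, g]

@[simp] lemma affRep_a (f g : AffGroup R) : affRep f g a = f := by simp [affRep, a]
@[simp] lemma affRep_b (f g : AffGroup R) : affRep f g b = g := by simp [affRep, b]

lemma scaleHom_comp_affRep {f g : AffGroup R} {ζ : Rˣ} {s t : ℤ} (hf : f.scale = ζ ^ s)
    (hg : g.scale = ζ ^ t) : scaleHom.comp (affRep f g) = (zpowersHom Rˣ ζ).comp (expSum s t) := by
  ext i
  fin_cases i <;> simp [affRep, expSum, hf, hg]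

lemma shift_affRep_nu_mul_lambda_inv (ζ : Rˣ) (p q n : ℤ) :
    (affRep (dilation ζ) (translation 1)
      ((a * b⁻¹ * a⁻¹ * b) ^ n * b ^ q * (b * a⁻¹ * b⁻¹ * a) ^ n * a ^ (p + 1))).shift =
      q + n * (2 - ζ - ((ζ⁻¹ : Rˣ) : R)) := by
  have hc₁ : affRep (dilation ζ) (translation 1) (a * b⁻¹ * a⁻¹ * b) =
      translation (1 - (ζ : R)) := by
    ext <;> simp; ring
  have hc₂ : affRep (dilation ζ) (translation 1) (b * a⁻¹ * b⁻¹ * a) =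
      translation (1 - ((ζ⁻¹ : Rˣ) : R)) := by
    ext <;> simp; ring
  rw [map_mul, map_mul, map_mul, map_zpow, map_zpow, map_zpow, map_zpow, hc₁, hc₂, affRep_a,
    affRep_b, translation_zpow, translation_zpow, translation_zpow, dilation_zpow]
  simp [-map_zpow]
  ring

lemma shift_affRep_mu_mul_nu_inv {ζ : Rˣ} {q : ℤ} (hζ : ζ ^ (q + 1) = 1) (n : ℤ) :
    (affRep (translation 1 * dilation ζ) (dilation ζ)
      (b⁻¹ * (a⁻¹ * b * a * b⁻¹) ^ n * b ^ (-q) * (b⁻¹ * a * b * a⁻¹) ^ n)).shift =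
      -(n * (1 - ((ζ⁻¹ : Rˣ) : R)) ^ 2) := by
  have hc₁ : affRep (translation 1 * dilation ζ) (dilation ζ) (a⁻¹ * b * a * b⁻¹) =
      translation (1 - ((ζ⁻¹ : Rˣ) : R)) := by
    ext <;> simp; ring
  have hc₂ : affRep (translation 1 * dilation ζ) (dilation ζ) (b⁻¹ * a * b * a⁻¹) =
      translation (((ζ⁻¹ : Rˣ) : R) - 1) := by
    ext <;> simp; ring
  have hq : ζ ^ (-q) = ζ := by rw [← mul_one (ζ ^ (-q)), ← hζ, ← zpow_add]; simp
  rw [map_mul, map_mul, map_mul, map_inv, map_zpow, map_zpow, map_zpow, hc₁, hc₂, affRep_b,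
    translation_zpow, translation_zpow, dilation_zpow, hq]
  simp [-map_zpow]
  ring

end AffRep

lemma Complex.intCast_add_mul_two_sub_ne_zero {z w : ℂ} (hz : ‖z‖ ≤ 1) (hw : ‖w‖ ≤ 1) {q n : ℤ}
    (hq : 0 < q) (hn : 0 ≤ n) : (q : ℂ) + n * (2 - z - w) ≠ 0 := by
  intro h
  have hre := congrArg Complex.re h
  simp only [Complex.add_re, Complex.mul_re, Complex.sub_re, Complex.intCast_re, Complex.intCast_im,
    Complex.re_ofNat, Complex.sub_im, Complex.zero_re, zero_mul, sub_zero] at hre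
  have hq' : (0 : ℝ) < q := by exact_mod_cast hq
  have hn' : (0 : ℝ) ≤ n := by exact_mod_cast hn
  nlinarith [(Complex.re_le_norm z).trans hz, (Complex.re_le_norm w).trans hw]

theorem not_isProperPower_nu_mul_lambda_inv {p q n : ℤ} (hp : 0 ≤ p) (hq : 0 < q) (hn : 0 ≤ n) :
    ¬ IsProperPower ((a * b⁻¹ * a⁻¹ * b) ^ n * b ^ q * (b * a⁻¹ * b⁻¹ * a) ^ n * a ^ (p + 1)) := by
  obtain ⟨N, hN⟩ : ∃ N : ℕ, (N : ℤ) = p + 1 := ⟨(p + 1).toNat, by omega⟩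
  obtain ⟨ζ, hζ⟩ := Complex.exists_isPrimitiveRoot_units N (by omega)
  have hnorm {u : ℂˣ} (hu : IsPrimitiveRoot u N) : ‖(u : ℂ)‖ ≤ 1 :=
    ((IsPrimitiveRoot.coe_units_iff.2 hu).norm'_eq_one (by omega)).le
  refine not_isProperPower_of_affGroup (affRep (dilation ζ) (translation 1)) (expSum 1 0) hζ
    (by omega) (scaleHom_comp_affRep (by simp) (by simp)) (by simp [abs_eq_max_neg]; omega) ?_
  rw [shift_affRep_nu_mul_lambda_inv]
  exact Complex.intCast_add_mul_two_sub_ne_zero (hnorm hζ) (hnorm hζ.inv) hq hn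

theorem not_isProperPower_mu_mul_nu_inv {q n : ℤ} (hq : 1 ≤ q) (hn : n ≠ 0) :
    ¬ IsProperPower (b⁻¹ * (a⁻¹ * b * a * b⁻¹) ^ n * b ^ (-q) * (b⁻¹ * a * b * a⁻¹) ^ n) := by
  obtain ⟨N, hN⟩ : ∃ N : ℕ, (N : ℤ) = q + 1 := ⟨(q + 1).toNat, by omega⟩
  obtain ⟨ζ, hζ⟩ := Complex.exists_isPrimitiveRoot_units N (by omega)
  refine not_isProperPower_of_affGroup (affRep (translation 1 * dilation ζ) (dilation ζ))
    (expSum 1 1) hζ (by omega) (scaleHom_comp_affRep (by simp) (by simp))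
    (by simp [abs_eq_max_neg]; omega) ?_
  rw [shift_affRep_mu_mul_nu_inv (by rw [← hN, zpow_natCast, hζ.pow_eq_one])]
  have hζ₁ : ((ζ⁻¹ : ℂˣ) : ℂ) ≠ 1 := Units.val_eq_one.not.2 (hζ.inv.ne_one (by omega))
  exact neg_ne_zero.2 (mul_ne_zero (Int.cast_ne_zero.2 hn) (pow_ne_zero 2 (sub_ne_zero.2 hζ₁.symm)))

/-- For `p, q ≥ 2` and `n ≥ 1`, none of the elements `λμ⁻¹`, `νλ⁻¹`, `μν⁻¹` arising from the
first once-punctured torus for the knot `K_n` of Figure 3 is a proper power. -/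
theorem stmt_4 (p q n : ℤ) (hp : 2 ≤ p) (hq : 2 ≤ q) (hn : 1 ≤ n) :
    ¬ IsProperPower (a ^ (-(p + 1)) * b) ∧
    ¬ IsProperPower ((a * b⁻¹ * a⁻¹ * b) ^ n * b ^ q * (b * a⁻¹ * b⁻¹ * a) ^ n * a ^ (p + 1)) ∧
    ¬ IsProperPower (b⁻¹ * (a⁻¹ * b * a * b⁻¹) ^ n * b ^ (-q) * (b⁻¹ * a * b * a⁻¹) ^ n) :=
  ⟨not_isProperPower_of_toAdd_eq_one (expSum 0 1) (by simp),
    not_isProperPower_nu_mul_lambda_inv (by omega) (by omega) (by omega),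
    not_isProperPower_mu_mul_nu_inv (by omega) (by omega)⟩
end

section
/- For all integers p, q, n ≥ 1, the element r'_{p,q,n} = a^{-(p+1)} · (b⁻¹·a·b·a⁻¹)^n · (b·a·b⁻¹·a⁻¹)^n · (b·a⁻¹·b⁻¹·a)^n · b^{q+1} · (a·b⁻¹·a⁻¹·b)^n · a^{p+1} · (b·a⁻¹·b⁻¹·a)^n · (b⁻¹·a⁻¹·b·a)^n · (b⁻¹·a·b·a⁻¹)^n · b^{-(q+1)} · (a⁻¹·b·a·b⁻¹)^n of F₂ is already in normal form: its reduced word (FreeGroup.toWord) is exactly the list of letters obtained by spelling out this expression letter by letter, and r'_{p,q,n} is cyclically reduced (the last letter of this list is not the inverse of the first). -/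
/-- The word spelled out by the knot `K_n` of Figure 6(a). -/
def r' (p q n : ℤ) : FreeGroup (Fin 2) :=
  a ^ (-(p + 1)) * (b⁻¹ * a * b * a⁻¹) ^ n * (b * a * b⁻¹ * a⁻¹) ^ n *
    (b * a⁻¹ * b⁻¹ * a) ^ n * b ^ (q + 1) * (a * b⁻¹ * a⁻¹ * b) ^ n * a ^ (p + 1) *
    (b * a⁻¹ * b⁻¹ * a) ^ n * (b⁻¹ * a⁻¹ * b * a) ^ n * (b⁻¹ * a * b * a⁻¹) ^ n *
    b ^ (-(q + 1)) * (a⁻¹ * b * a * b⁻¹) ^ n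

/-- The letter-by-letter spelling of `r' p q n`, where a letter `(x, s)` denotes `x` if
`s = true` and `x⁻¹` if `s = false`. -/
def r'Word (p q n : ℤ) : List (Fin 2 × Bool) :=
  List.replicate (p + 1).toNat ((0 : Fin 2), false) ++
  (List.replicate n.toNat [((1 : Fin 2), false), (0, true), (1, true), (0, false)]).flatten ++
  (List.replicate n.toNat [((1 : Fin 2), true), (0, true), (1, false), (0, false)]).flatten ++
  (List.replicate n.toNat [((1 : Fin 2), true), (0, false), (1, false), (0, true)]).flatten ++
  List.replicate (q + 1).toNat ((1 : Fin 2), true) ++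
  (List.replicate n.toNat [((0 : Fin 2), true), (1, false), (0, false), (1, true)]).flatten ++
  List.replicate (p + 1).toNat ((0 : Fin 2), true) ++
  (List.replicate n.toNat [((1 : Fin 2), true), (0, false), (1, false), (0, true)]).flatten ++
  (List.replicate n.toNat [((1 : Fin 2), false), (0, false), (1, true), (0, true)]).flatten ++
  (List.replicate n.toNat [((1 : Fin 2), false), (0, true), (1, true), (0, false)]).flatten ++
  List.replicate (q + 1).toNat ((1 : Fin 2), false) ++
  (List.replicate n.toNat [((0 : Fin 2), false), (1, true), (0, true), (1, false)]).flatten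

/-! A power `w ^ m` with `m ≥ 1` of a cyclically reduced word `w` can be put in place of `w`
inside a cyclically reduced word without creating a cancellation: the new junctions inside
`w ^ m` join the last letter of `w` to its first letter, and the outer neighbours see the same
letters as before. Every factor of `r' p q n` is such a power, so it suffices to check the
finitely many letters of the word in which all exponents are `1`. -/

open FreeGroup List

namespace FreeGroup

variable {α : Type*}

def powersWord (ws : List (List (α × Bool))) (ms : List ℕ) : List (α × Bool) :=
  (zipWith (fun w m => (replicate m w).flatten) ws ms).flatten

theorem powersWord_cons_cons (w : List (α × Bool)) (ws : List (List (α × Bool))) (m : ℕ)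
    (ms : List ℕ) : powersWord (w :: ws) (m :: ms) = (replicate m w).flatten ++ powersWord ws ms :=
  rfl

theorem mk_powersWord (ws : List (List (α × Bool))) (ms : List ℕ) :
    mk (powersWord ws ms) = (zipWith (fun w m => mk w ^ m) ws ms).prod := by
  induction ws generalizing ms with
  | nil => simp [powersWord, one_eq_mk]
  | cons w ws ih =>
    obtain _ | ⟨m, ms⟩ := ms
    · simp [powersWord, one_eq_mk]
    · rw [powersWord_cons_cons, ← mul_mk, ← pow_mk, ih, zipWith_cons_cons, prod_cons]

instance [DecidableEq α] : DecidablePred (IsCyclicallyReduced (α := α)) := fun _ => by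
  unfold IsCyclicallyReduced IsReduced
  infer_instance

theorem IsCyclicallyReduced.append_flatten_replicate_append {L₁ L₂ L₃ : List (α × Bool)}
    (h₂ : IsCyclicallyReduced L₂) (h : IsCyclicallyReduced (L₁ ++ L₂ ++ L₃)) {n : ℕ}
    (hn : n ≠ 0) : IsCyclicallyReduced (L₁ ++ (replicate n L₂).flatten ++ L₃) := by
  refine ⟨h.isReduced.append_flatten_replicate_append h₂ hn, ?_⟩
  have hhead : (L₁ ++ (replicate n L₂).flatten ++ L₃).head? = (L₁ ++ L₂ ++ L₃).head? := by
    simp [head?_append, head?_flatten_replicate hn]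
  have hlast : (L₁ ++ (replicate n L₂).flatten ++ L₃).getLast? = (L₁ ++ L₂ ++ L₃).getLast? := by
    simp [getLast?_append, getLast?_flatten_replicate hn]
  rw [hhead, hlast]
  exact h.2

theorem IsCyclicallyReduced.append_powersWord {ws : List (List (α × Bool))} {ms : List ℕ}
    (hlen : ws.length = ms.length) (hws : ∀ w ∈ ws, IsCyclicallyReduced w)
    (hms : ∀ m ∈ ms, m ≠ 0) {L : List (α × Bool)} (h : IsCyclicallyReduced (L ++ ws.flatten)) :
    IsCyclicallyReduced (L ++ powersWord ws ms) := by
  induction ws generalizing L ms with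
  | nil => simpa [powersWord] using h
  | cons w ws ih =>
    obtain _ | ⟨m, ms⟩ := ms
    · simp at hlen
    simp only [mem_cons, forall_eq_or_imp] at hws hms
    rw [powersWord_cons_cons, ← append_assoc]
    refine ih (by simpa using hlen) hws.2 hms.2 ?_
    rw [flatten_cons, ← append_assoc] at h
    exact hws.1.append_flatten_replicate_append h hms.1

theorem IsCyclicallyReduced.powersWord {ws : List (List (α × Bool))} {ms : List ℕ}
    (hlen : ws.length = ms.length) (hws : ∀ w ∈ ws, IsCyclicallyReduced w)
    (hms : ∀ m ∈ ms, m ≠ 0) (h : IsCyclicallyReduced ws.flatten) :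
    IsCyclicallyReduced (powersWord ws ms) :=
  append_powersWord (L := []) hlen hws hms h

end FreeGroup

theorem cyclicallyReduced_of_isCyclicallyReduced_toWord {α : Type*} [DecidableEq α]
    {g : FreeGroup α} (h : IsCyclicallyReduced g.toWord) : CyclicallyReduced g := by
  intro x hx y hy hyx
  simpa [hyx] using h.2 y hy x hx

theorem zpow_eq_pow_toNat {G : Type*} [Group G] (g : G) {k : ℤ} (hk : 0 ≤ k) :
    g ^ k = g ^ k.toNat := by
  rw [← zpow_natCast, Int.toNat_of_nonneg hk]

def r'Blocks : List (List (Fin 2 × Bool)) :=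
  [[(0, false)], [(1, false), (0, true), (1, true), (0, false)],
    [(1, true), (0, true), (1, false), (0, false)], [(1, true), (0, false), (1, false), (0, true)],
    [(1, true)], [(0, true), (1, false), (0, false), (1, true)], [(0, true)],
    [(1, true), (0, false), (1, false), (0, true)], [(1, false), (0, false), (1, true), (0, true)],
    [(1, false), (0, true), (1, true), (0, false)], [(1, false)],
    [(0, false), (1, true), (0, true), (1, false)]]

def r'Exponents (p q n : ℤ) : List ℕ :=
  [(p + 1).toNat, n.toNat, n.toNat, n.toNat, (q + 1).toNat, n.toNat, (p + 1).toNat, n.toNat,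
    n.toNat, n.toNat, (q + 1).toNat, n.toNat]

theorem r'Word_eq_powersWord (p q n : ℤ) :
    r'Word p q n = powersWord r'Blocks (r'Exponents p q n) := by
  simp [r'Word, r'Blocks, r'Exponents, powersWord, flatten_replicate_singleton]

theorem r'_eq_mk_r'Word {p q n : ℤ} (hp : 0 ≤ p + 1) (hq : 0 ≤ q + 1) (hn : 0 ≤ n) :
    r' p q n = mk (r'Word p q n) := by
  rw [r'Word_eq_powersWord, mk_powersWord]
  simp only [r', zpow_neg, zpow_eq_pow_toNat _ hp, zpow_eq_pow_toNat _ hq,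
    zpow_eq_pow_toNat _ hn, ← inv_pow, r'Blocks, r'Exponents, zipWith_cons_cons,
    zipWith_nil_left, prod_cons, prod_nil, mul_one, mul_assoc]
  -- each base such as `b⁻¹ * a * b * a⁻¹` is `mk` of its spelling by definition
  rfl

theorem isCyclicallyReduced_r'Word {p q n : ℤ} (hp : 0 < p + 1) (hq : 0 < q + 1) (hn : 0 < n) :
    IsCyclicallyReduced (r'Word p q n) := by
  rw [r'Word_eq_powersWord]
  refine .powersWord rfl (by decide) ?_ (by decide)
  simp only [r'Exponents, mem_cons, not_mem_nil, or_false, forall_eq_or_imp, forall_eq]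
  omega

/-- For all `p, q, n ≥ 1`, the element `r' p q n` is in normal form: its reduced word is its
letter-by-letter spelling, and it is cyclically reduced. -/
theorem stmt_7 (p q n : ℤ) (hp : 1 ≤ p) (hq : 1 ≤ q) (hn : 1 ≤ n) :
    FreeGroup.toWord (r' p q n) = r'Word p q n ∧ CyclicallyReduced (r' p q n) := by
  have hred : IsCyclicallyReduced (r'Word p q n) :=
    isCyclicallyReduced_r'Word (by omega) (by omega) (by omega)
  have hword : (r' p q n).toWord = r'Word p q n := by
    rw [r'_eq_mk_r'Word (by omega) (by omega) (by omega), toWord_mk, hred.isReduced.reduce_eq]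
  exact ⟨hword, cyclicallyReduced_of_isCyclicallyReduced_toWord (hword ▸ hred)⟩
end

section
/- For all integers p, q ≥ 2, let H₀ be the subgroup of F₂ generated by a^{p+1} and b^{q+1}·a⁻¹. Then for every element w ∈ H₀, every maximal run of consecutive letters from the generator b (i.e. consecutive letters each equal to b or b⁻¹) in the reduced word of w has length at least 2; in particular, the reduced word of w never contains a single b or b⁻¹ surrounded only by letters a or a⁻¹ (or by the ends of the word). -/
/-- The subgroup `H₀` of the free group on two generators, generated by `a^(p+1)` and
`b^(q+1) * a⁻¹`: the image of the fundamental group of the first once-punctured torus. -/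
def H₀ (p q : ℤ) : Subgroup (FreeGroup (Fin 2)) :=
  Subgroup.closure {a ^ (p + 1), b ^ (q + 1) * a⁻¹}

/-!
`H₀` is the fundamental group, at the vertex `0`, of the folded graph made of a cycle of
`|p + 1|` `a`-edges `0 → 1 → ⋯` and a path of `q + 1` `b`-edges from `0` to `1`: the generator
`b^(q+1) a⁻¹` runs along the `b`-path and comes back along the `a`-edge `0 → 1`. In a folded graph
free reduction preserves paths, so the reduced word of every `w ∈ H₀` is a closed path at `0`.
A `b`-letter flanked by `a`-letters or by the ends of the word would be a single `b`-edge between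
two vertices of the cycle; as `q + 1 ≥ 2`, every `b`-edge has an interior vertex of the `b`-path as
an endpoint.
-/

namespace FreeGroup

-- `E i u v`: an edge labelled `i` from `u` to `v`.
variable {α V : Type*} (E : α → V → V → Prop)

def Traverses : α × Bool → V → V → Prop
  | (i, true), u, v => E i u v
  | (i, false), u, v => E i v u

inductive IsPath : V → List (α × Bool) → V → Prop
  | nil (u : V) : IsPath u [] u
  | cons {u v w : V} {x : α × Bool} {L : List (α × Bool)} :
      Traverses E x u v → IsPath v L w → IsPath u (x :: L) w

variable {E}

@[simp]
theorem isPath_nil {u v : V} : IsPath E u [] v ↔ u = v :=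
  ⟨by rintro ⟨⟩; rfl, by rintro rfl; exact .nil u⟩

theorem isPath_cons {u w : V} {x : α × Bool} {L : List (α × Bool)} :
    IsPath E u (x :: L) w ↔ ∃ v, Traverses E x u v ∧ IsPath E v L w :=
  ⟨by rintro ⟨⟩; exact ⟨_, ‹_›, ‹_›⟩, fun ⟨_, hx, hL⟩ => .cons hx hL⟩

theorem isPath_append {u w : V} {L M : List (α × Bool)} :
    IsPath E u (L ++ M) w ↔ ∃ v, IsPath E u L v ∧ IsPath E v M w := by
  induction L generalizing u with
  | nil => simp
  | cons x L ih =>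
    simp only [List.cons_append, isPath_cons, ih]
    exact ⟨fun ⟨v, hx, m, hL, hM⟩ => ⟨m, ⟨v, hx, hL⟩, hM⟩,
      fun ⟨m, ⟨v, hx, hL⟩, hM⟩ => ⟨v, hx, m, hL, hM⟩⟩

theorem traverses_flip {x : α × Bool} {u v : V} :
    Traverses E (x.1, !x.2) v u ↔ Traverses E x u v := by
  obtain ⟨i, _ | _⟩ := x <;> rfl

theorem IsPath.invRev {u v : V} {L : List (α × Bool)} (h : IsPath E u L v) :
    IsPath E v (invRev L) u := by
  induction h with
  | nil => exact .nil _
  | cons hx _ ih =>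
    rw [invRev_cons]
    exact isPath_append.2 ⟨_, ih, .cons (traverses_flip.2 hx) (.nil _)⟩

theorem Traverses.eq_of_flip (hE : ∀ i, Relator.BiUnique (E i)) {x : α × Bool} {u v w : V}
    (h₁ : Traverses E x u v) (h₂ : Traverses E (x.1, !x.2) v w) : u = w := by
  obtain ⟨i, _ | _⟩ := x
  exacts [(hE i).2 h₁ h₂, (hE i).1 h₁ h₂]

theorem IsPath.of_red_step (hE : ∀ i, Relator.BiUnique (E i)) {u v : V} {L M : List (α × Bool)}
    (hLM : Red.Step L M) (h : IsPath E u L v) : IsPath E u M v := by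
  obtain ⟨L₁, L₂, i, s⟩ := hLM
  obtain ⟨m, h₁, h₂⟩ := isPath_append.1 h
  obtain ⟨m', hx, m'', hx', h₂⟩ := by simpa only [isPath_cons] using h₂
  exact isPath_append.2 ⟨m, h₁, (hx.eq_of_flip hE hx') ▸ h₂⟩

theorem IsPath.of_red (hE : ∀ i, Relator.BiUnique (E i)) {u v : V} {L M : List (α × Bool)}
    (hLM : Red L M) (h : IsPath E u L v) : IsPath E u M v := by
  induction hLM with
  | refl => exact h
  | tail _ hstep ih => exact ih.of_red_step hE hstep

theorem IsPath.toWord_mul [DecidableEq α] (hE : ∀ i, Relator.BiUnique (E i)) {u v w : V}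
    {g h : FreeGroup α} (hg : IsPath E u g.toWord v) (hh : IsPath E v h.toWord w) :
    IsPath E u (g * h).toWord w := by
  rw [FreeGroup.toWord_mul]
  exact (isPath_append.2 ⟨v, hg, hh⟩).of_red hE reduce.red

def loopSubgroup [DecidableEq α] (hE : ∀ i, Relator.BiUnique (E i)) (v : V) :
    Subgroup (FreeGroup α) where
  carrier := {g | IsPath E v g.toWord v}
  one_mem' := by simp [toWord_one]
  mul_mem' hg hh := hg.toWord_mul hE hh
  inv_mem' {g} hg := by simpa [toWord_inv] using hg.invRev

end FreeGroup

namespace H₀Graph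

open FreeGroup

variable {n Q : ℕ}

def aEdge (n : ℕ) : ZMod n ⊕ ℕ → ZMod n ⊕ ℕ → Prop
  | .inl i, .inl j => j = i + 1
  | _, _ => False

/-- `inl i` are the vertices of the `a`-cycle (the line `ℤ` when `n = 0`) and `inr k` is the
`k`-th interior vertex of the `b`-path from `inl 0` to `inl 1`; the `inr k` with `Q ≤ k + 1` are
isolated. -/
def bEdge (n Q : ℕ) : ZMod n ⊕ ℕ → ZMod n ⊕ ℕ → Prop
  | .inl i, .inr k => i = 0 ∧ k = 0
  | .inr k, .inr k' => k' = k + 1 ∧ k + 2 < Q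
  | .inr k, .inl i => i = 1 ∧ k + 2 = Q
  | .inl _, .inl _ => False

def graph (n Q : ℕ) : Fin 2 → ZMod n ⊕ ℕ → ZMod n ⊕ ℕ → Prop
  | 0 => aEdge n
  | 1 => bEdge n Q

theorem aEdge_biUnique : Relator.BiUnique (aEdge n) := by
  constructor <;> rintro (_ | _) (_ | _) (_ | _) <;> simp [aEdge] <;> grind

theorem bEdge_biUnique : Relator.BiUnique (bEdge n Q) := by
  constructor <;> rintro (_ | _) (_ | _) (_ | _) <;> simp [bEdge] <;> grind

theorem graph_biUnique : ∀ i, Relator.BiUnique (graph n Q i)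
  | 0 => aEdge_biUnique
  | 1 => bEdge_biUnique

theorem isPath_replicate_a (i : ZMod n) (m : ℕ) :
    IsPath (graph n Q) (.inl i) (List.replicate m (0, true)) (.inl (i + m)) := by
  induction m generalizing i with
  | zero => simp
  | succ m ih =>
    refine .cons (v := .inl (i + 1)) (by simp [Traverses, graph, aEdge]) ?_
    simpa [add_assoc, add_comm (1 : ZMod n)] using ih (i + 1)

theorem isPath_replicate_b_of_inr (k m : ℕ) (h : k + m + 2 = Q) :
    IsPath (graph n Q) (.inr k) (List.replicate (m + 1) (1, true)) (.inl 1) := by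
  induction m generalizing k with
  | zero => exact .cons (v := .inl 1) (by simp [Traverses, graph, bEdge]; omega) (.nil _)
  | succ m ih =>
    exact .cons (v := .inr (k + 1)) (by simp [Traverses, graph, bEdge]; omega)
      (ih (k + 1) (by omega))

theorem isPath_replicate_b (hQ : 2 ≤ Q) :
    IsPath (graph n Q) (.inl 0) (List.replicate Q (1, true)) (.inl 1) := by
  obtain ⟨m, rfl⟩ : ∃ m, Q = m + 2 := ⟨Q - 2, by omega⟩
  exact .cons (v := .inr 0) (by simp [Traverses, graph, bEdge])
    (isPath_replicate_b_of_inr 0 m (by omega))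

theorem exists_eq_inl_of_traverses {x : Fin 2 × Bool} (hx : x.1 ≠ 1) {u v : ZMod n ⊕ ℕ}
    (h : Traverses (graph n Q) x u v) : ∃ i, u = .inl i := by
  obtain ⟨i, s⟩ := x
  obtain rfl : i = 0 := by fin_cases i <;> simp_all
  cases s <;> rcases u with _ | _ <;> rcases v with _ | _ <;> simp_all [Traverses, graph, aEdge]

theorem exists_eq_inl_of_isPath {L : List (Fin 2 × Bool)} {u : ZMod n ⊕ ℕ} {j : ZMod n}
    (h : IsPath (graph n Q) u L (.inl j)) (hL : ∀ x ∈ L.head?, x.1 ≠ 1) : ∃ i, u = .inl i := by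
  cases h with
  | nil => exact ⟨j, rfl⟩
  | cons hx _ => exact exists_eq_inl_of_traverses (hL _ rfl) hx

theorem not_traverses_b_inl_inl {s : Bool} {i j : ZMod n} :
    ¬ Traverses (graph n Q) (1, s) (.inl i) (.inl j) := by
  cases s <;> simp [Traverses, graph, bEdge]

def loops (n Q : ℕ) : Subgroup (FreeGroup (Fin 2)) :=
  loopSubgroup (graph_biUnique (n := n) (Q := Q)) (.inl 0)

theorem H₀_le_loops (p q : ℤ) (hq : 1 ≤ q) : H₀ p q ≤ loops (p + 1).natAbs (q + 1).toNat := by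
  rw [H₀, Subgroup.closure_le, Set.insert_subset_iff, Set.singleton_subset_iff]
  constructor
  · have ha : a ^ (p + 1).natAbs ∈ loops (p + 1).natAbs (q + 1).toNat := by
      show IsPath _ _ _ _
      simpa [a, toWord_of_pow] using
        isPath_replicate_a (n := (p + 1).natAbs) (Q := (q + 1).toNat) 0 (p + 1).natAbs
    rcases Int.natAbs_eq (p + 1) with h | h <;>
      generalize (p + 1).natAbs = N at h ha ⊢ <;> rw [h]
    · simpa using ha
    · simpa using inv_mem ha
  · show IsPath _ _ _ _
    have hb : IsPath (graph (p + 1).natAbs (q + 1).toNat) (.inl 0) (b ^ (q + 1)).toWord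
        (.inl 1) := by
      rw [show q + 1 = ((q + 1).toNat : ℤ) by omega, zpow_natCast, b, toWord_of_pow]
      exact isPath_replicate_b (by omega)
    refine hb.toWord_mul graph_biUnique ?_
    simpa [a, toWord_inv, invRev] using
      .cons (v := .inl 0) (by simp [Traverses, graph, aEdge]) (.nil _)

theorem exists_b_neighbour_of_isPath {l r : List (Fin 2 × Bool)} {s : Bool}
    (h : IsPath (graph n Q) (.inl 0) (l ++ (1, s) :: r) (.inl 0)) :
    (∃ x ∈ l.getLast?, x.1 = 1) ∨ (∃ x ∈ r.head?, x.1 = 1) := by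
  by_contra! hne
  obtain ⟨u, hl, hbr⟩ := isPath_append.1 h
  obtain ⟨v, hb, hr⟩ := isPath_cons.1 hbr
  obtain ⟨i, rfl⟩ := exists_eq_inl_of_isPath hl.invRev fun x hx => by
    simp only [invRev, List.head?_reverse, List.getLast?_map, Option.mem_map] at hx
    obtain ⟨y, hy, rfl⟩ := hx
    exact hne.1 y hy
  obtain ⟨j, rfl⟩ := exists_eq_inl_of_isPath hr hne.2
  exact not_traverses_b_inl_inl hb

end H₀Graph

theorem stmt_10_general (p q : ℤ) (hq : 2 ≤ q) (w : FreeGroup (Fin 2))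
    (hw : w ∈ H₀ p q) :
    ∀ (l r : List (Fin 2 × Bool)) (s : Bool),
      w.toWord = l ++ ((1 : Fin 2), s) :: r →
      (∃ x ∈ l.getLast?, x.1 = 1) ∨ (∃ x ∈ r.head?, x.1 = 1) := by
  intro l r s hw_eq
  have hloop : FreeGroup.IsPath (H₀Graph.graph (p + 1).natAbs (q + 1).toNat) (.inl 0) w.toWord
      (.inl 0) := H₀Graph.H₀_le_loops p q (by omega) hw
  rw [hw_eq] at hloop
  exact H₀Graph.exists_b_neighbour_of_isPath hloop

/-- For `p, q ≥ 2` and `w ∈ H₀`, every maximal run of consecutive `b`-letters in the reduced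
word of `w` has length at least `2`: every occurrence of a letter `b^{±1}` has a neighbouring
letter which is also `b^{±1}`. -/
theorem stmt_10 (p q : ℤ) (hp : 2 ≤ p) (hq : 2 ≤ q) (w : FreeGroup (Fin 2))
    (hw : w ∈ H₀ p q) :
    ∀ (l r : List (Fin 2 × Bool)) (s : Bool),
      w.toWord = l ++ ((1 : Fin 2), s) :: r →
      (∃ x ∈ l.getLast?, x.1 = 1) ∨ (∃ x ∈ r.head?, x.1 = 1) :=
  stmt_10_general p q hq w hw
end

section
/- For all integers p, q ≥ 2, let H₁ be the subgroup of F₂ generated by a^{p+1}·b⁻¹ and b^{q+1}. Then for every element w ∈ H₁, every maximal run of consecutive letters from the generator a (i.e. consecutive letters each equal to a or a⁻¹) in the reduced word of w has length at least 2; in particular, the reduced word of w never contains a single a or a⁻¹ surrounded only by letters b or b⁻¹ (or by the ends of the word). -/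
/-- The subgroup `H₁` of the free group on two generators, generated by `a^(p+1) * b⁻¹` and
`b^(q+1)`: the image of the fundamental group of the second once-punctured torus. -/
def H₁ (p q : ℤ) : Subgroup (FreeGroup (Fin 2)) :=
  Subgroup.closure {a ^ (p + 1) * b⁻¹, b ^ (q + 1)}

namespace FreeGroup

variable {α : Type*} {i : α}

def NoIsolatedLetter (i : α) (L : List (α × Bool)) : Prop :=
  ∀ l r s, L = l ++ (i, s) :: r → (∃ x ∈ l.getLast?, x.1 = i) ∨ (∃ x ∈ r.head?, x.1 = i)

theorem NoIsolatedLetter.append {L₁ L₂ : List (α × Bool)} (h₁ : NoIsolatedLetter i L₁)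
    (h₂ : NoIsolatedLetter i L₂) : NoIsolatedLetter i (L₁ ++ L₂) := by
  intro l r s h
  rcases List.append_eq_append_iff.mp h with ⟨l', rfl, hL₂⟩ | ⟨c, rfl, hr⟩
  · refine (h₂ l' r s hL₂).imp_left fun ⟨x, hx, hxi⟩ => ⟨x, ?_, hxi⟩
    exact List.mem_getLast?_append_of_mem_getLast? hx
  · rcases c with _ | ⟨y, c⟩
    · refine (h₂ [] r s (by simpa using hr.symm)).imp_left ?_
      simp
    · obtain ⟨rfl, rfl⟩ := List.cons_eq_cons.mp hr
      refine (h₁ l c s rfl).imp_right fun ⟨x, hx, hxi⟩ => ⟨x, ?_, hxi⟩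
      exact List.mem_head?_append_of_mem_head? hx

theorem NoIsolatedLetter.flatMap {β : Type*} {f : β → List (α × Bool)} {L : List β}
    (h : ∀ x ∈ L, NoIsolatedLetter i (f x)) : NoIsolatedLetter i (L.flatMap f) := by
  induction L with
  | nil => intro l r s h; simp at h
  | cons x L ih =>
    rw [List.flatMap_cons]
    exact (h x List.mem_cons_self).append (ih fun y hy => h y (List.mem_cons_of_mem x hy))

theorem noIsolatedLetter_replicate {m : ℕ} {x : α × Bool} (h : x.1 = i → m ≠ 1) :
    NoIsolatedLetter i (List.replicate m x) := by
  intro l r s hL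
  have hmem : ∀ z ∈ l ++ (i, s) :: r, z = x := fun z hz => List.eq_of_mem_replicate (hL ▸ hz)
  have hx : x.1 = i := by rw [← hmem (i, s) (by simp)]
  rcases r with _ | ⟨z, r⟩
  · left
    rcases l.eq_nil_or_concat with rfl | ⟨l, z, rfl⟩
    · exact absurd (by simpa using congrArg List.length hL) (h hx)
    · exact ⟨z, by simp, by rw [hmem z (by simp), hx]⟩
  · exact .inr ⟨z, rfl, by rw [hmem z (by simp), hx]⟩

theorem mk_replicate (m : ℕ) (x : α × Bool) : mk (List.replicate m x) = mk [x] ^ m := by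
  rw [pow_mk, List.flatten_replicate_singleton]

variable [DecidableEq α] {n : ℕ}

def powGen (i : α) (n : ℕ) : FreeGroup α →* FreeGroup α :=
  lift fun j => of j ^ if j = i then n else 1

def expandWord (i : α) (n : ℕ) (L : List (α × Bool)) : List (α × Bool) :=
  L.flatMap fun x => List.replicate (if x.1 = i then n else 1) x

theorem powGen_mk_singleton (x : α × Bool) :
    powGen i n (mk [x]) = mk [x] ^ if x.1 = i then n else 1 := by
  obtain ⟨j, _ | _⟩ := x
  · have hinv : mk [(j, false)] = (of j)⁻¹ := by simp [of, inv_mk, invRev]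
    rw [hinv, _root_.map_inv, powGen, lift_apply_of, inv_pow]
  · exact lift_apply_of

theorem powGen_mk (L : List (α × Bool)) : powGen i n (mk L) = mk (expandWord i n L) := by
  induction L with
  | nil => simp [expandWord, ← one_eq_mk]
  | cons x L ih =>
    rw [expandWord, List.flatMap_cons, ← expandWord, ← mul_mk, ← ih, mk_replicate,
      ← powGen_mk_singleton, ← _root_.map_mul, mul_mk, List.singleton_append]

theorem IsReduced.expandWord {L : List (α × Bool)} (h : IsReduced L) (hn : n ≠ 0) :
    IsReduced (expandWord i n L) := by
  have hne : ∀ x : α × Bool, (if x.1 = i then n else 1) ≠ 0 := fun x => by split_ifs <;> omega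
  rw [FreeGroup.expandWord, List.flatMap, IsReduced, List.isChain_flatten (by simp [hne]),
    List.isChain_map]
  refine ⟨?_, h.imp fun x y hxy => ?_⟩
  · simp only [List.mem_map]
    rintro _ ⟨x, -, rfl⟩
    exact List.isChain_replicate_of_rel _ fun _ => rfl
  · simpa [List.getLast?_replicate, List.head?_replicate, hne] using hxy

theorem toWord_powGen (hn : n ≠ 0) (g : FreeGroup α) :
    (powGen i n g).toWord = expandWord i n g.toWord := by
  conv_lhs => rw [← mk_toWord (x := g)]
  rw [powGen_mk, toWord_mk, (isReduced_toWord.expandWord hn).reduce_eq]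

theorem noIsolatedLetter_expandWord (hn : n ≠ 1) (L : List (α × Bool)) :
    NoIsolatedLetter i (expandWord i n L) :=
  NoIsolatedLetter.flatMap fun x _ => noIsolatedLetter_replicate fun hx => by simpa [hx]

end FreeGroup

open FreeGroup

theorem H₁_le_range_powGen (p q : ℤ) {n : ℕ} (hn : (n : ℤ) = p + 1) :
    H₁ p q ≤ (powGen 0 n).range := by
  rw [H₁, Subgroup.closure_le]
  rintro x (rfl | rfl)
  · exact ⟨a * b⁻¹, by simp [powGen, a, b, ← hn]⟩
  · exact ⟨b ^ (q + 1), by simp [powGen, b]⟩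

theorem stmt_11_general (p q : ℤ) (hp : 2 ≤ p) (w : FreeGroup (Fin 2))
    (hw : w ∈ H₁ p q) :
    ∀ (l r : List (Fin 2 × Bool)) (s : Bool),
      w.toWord = l ++ ((0 : Fin 2), s) :: r →
      (∃ x ∈ l.getLast?, x.1 = 0) ∨ (∃ x ∈ r.head?, x.1 = 0) := by
  obtain ⟨n, hn⟩ : ∃ n : ℕ, (n : ℤ) = p + 1 := ⟨(p + 1).toNat, by omega⟩
  obtain ⟨g, rfl⟩ := H₁_le_range_powGen p q hn hw
  rw [toWord_powGen (by omega)]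
  exact noIsolatedLetter_expandWord (by omega) g.toWord

/-- For `p, q ≥ 2` and `w ∈ H₁`, every maximal run of consecutive `a`-letters in the reduced
word of `w` has length at least `2`: every occurrence of a letter `a^{±1}` has a neighbouring
letter which is also `a^{±1}`. -/
theorem stmt_11 (p q : ℤ) (hp : 2 ≤ p) (hq : 2 ≤ q) (w : FreeGroup (Fin 2))
    (hw : w ∈ H₁ p q) :
    ∀ (l r : List (Fin 2 × Bool)) (s : Bool),
      w.toWord = l ++ ((0 : Fin 2), s) :: r →
      (∃ x ∈ l.getLast?, x.1 = 0) ∨ (∃ x ∈ r.head?, x.1 = 0) :=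
  stmt_11_general p q hp w hw
end

section
/- Let p, q ≥ 2 be integers and let g ∈ F₂ be an element whose reduced word L is nonempty and satisfies: for every index i, the generator of the letter L_i is different from the generator of the letter L_{(i+1) mod |L|} (so in particular no cyclic conjugate of the word of g, or of any power of g, contains an occurrence of a², a⁻², b², or b⁻²). Then for every integer v ≥ 1 and every h ∈ F₂, the conjugate h·g^v·h⁻¹ does not lie in H₀ and does not lie in H₁. -/
namespace FreeGroup

open List

variable {α : Type*}

section SameGenPairs

variable [DecidableEq α]

def sameGenPairs : List (α × Bool) → ℕ
  | [] => 0
  | [_] => 0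
  | x :: y :: L => (if x.1 = y.1 then 1 else 0) + sameGenPairs (y :: L)

@[simp]
theorem sameGenPairs_nil : sameGenPairs ([] : List (α × Bool)) = 0 := rfl

@[simp]
theorem sameGenPairs_singleton (x : α × Bool) : sameGenPairs [x] = 0 := rfl

@[simp]
theorem sameGenPairs_cons_cons (x y : α × Bool) (L : List (α × Bool)) :
    sameGenPairs (x :: y :: L) = (if x.1 = y.1 then 1 else 0) + sameGenPairs (y :: L) := rfl

theorem sameGenPairs_le_cons (x : α × Bool) (L : List (α × Bool)) :
    sameGenPairs L ≤ sameGenPairs (x :: L) := by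
  cases L <;> simp

theorem sameGenPairs_add_le_append :
    ∀ L₁ L₂ : List (α × Bool), sameGenPairs L₁ + sameGenPairs L₂ ≤ sameGenPairs (L₁ ++ L₂)
  | [], _ => by simp
  | [_], [] => by simp
  | [_], _ :: _ => by simp
  | x :: y :: L₁, L₂ => by
    have := sameGenPairs_add_le_append (y :: L₁) L₂
    simp only [cons_append, sameGenPairs_cons_cons] at *
    omega

theorem sameGenPairs_append_le :
    ∀ L₁ L₂ : List (α × Bool), sameGenPairs (L₁ ++ L₂) ≤ sameGenPairs L₁ + sameGenPairs L₂ + 1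
  | [], _ => by simp
  | [_], [] => by simp
  | [_], _ :: _ => by simp; split <;> omega
  | x :: y :: L₁, L₂ => by
    have := sameGenPairs_append_le (y :: L₁) L₂
    simp only [cons_append, sameGenPairs_cons_cons] at *
    omega

theorem sameGenPairs_append_of_ne :
    ∀ {L₁ L₂ : List (α × Bool)}, (∀ x ∈ L₁.getLast?, ∀ y ∈ L₂.head?, x.1 ≠ y.1) →
      sameGenPairs (L₁ ++ L₂) = sameGenPairs L₁ + sameGenPairs L₂
  | [], _, _ => by simp
  | [_], [], _ => by simp
  | [_], _ :: _, h => by simp_all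
  | x :: y :: L₁, L₂, h => by
    rw [getLast?_cons_cons] at h
    have := sameGenPairs_append_of_ne h
    simp only [cons_append, sameGenPairs_cons_cons] at *
    omega

theorem sameGenPairs_replicate (n : ℕ) (x : α × Bool) :
    sameGenPairs (replicate n x) = n - 1 := by
  induction n with
  | zero => rfl
  | succ n ih => cases n <;> simp_all [replicate_succ]; omega

theorem sameGenPairs_eq_zero_of_isChain {L : List (α × Bool)}
    (h : L.IsChain fun x y => x.1 ≠ y.1) : sameGenPairs L = 0 := by
  induction L with
  | nil => rfl
  | cons x L ih =>
    cases L with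
    | nil => rfl
    | cons y L =>
      rw [isChain_cons_cons] at h
      simp [h.1, ih h.2]

theorem Red.Step.sameGenPairs_le {L₁ L₂ : List (α × Bool)} (h : Red.Step L₁ L₂) :
    sameGenPairs L₂ ≤ sameGenPairs L₁ := by
  cases h with | @not M N x b =>
  have hM := sameGenPairs_append_le M N
  have hMN := sameGenPairs_add_le_append M ((x, b) :: (x, !b) :: N)
  have hN := sameGenPairs_le_cons (x, !b) N
  simp only [sameGenPairs_cons_cons, if_true] at hMN
  omega

theorem Red.sameGenPairs_le {L₁ L₂ : List (α × Bool)} (h : Red L₁ L₂) :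
    sameGenPairs L₂ ≤ sameGenPairs L₁ := by
  induction h with
  | refl => rfl
  | tail _ hstep ih => exact hstep.sameGenPairs_le.trans ih

theorem sameGenPairs_toWord_mul_le (x y : FreeGroup α) :
    sameGenPairs (x * y).toWord ≤ sameGenPairs x.toWord + sameGenPairs y.toWord + 1 := by
  rw [toWord_mul]
  exact reduce.red.sameGenPairs_le.trans (sameGenPairs_append_le _ _)

end SameGenPairs

def IsCyclicallyAlternating (L : List (α × Bool)) : Prop :=
  L.IsChain (fun x y => x.1 ≠ y.1) ∧ ∀ x ∈ L.getLast?, ∀ y ∈ L.head?, x.1 ≠ y.1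

theorem isCyclicallyAlternating_of_forall_get {L : List (α × Bool)} (hL : L ≠ [])
    (h : ∀ k : Fin L.length, (L.get k).1 ≠
      (L.get ⟨(k.val + 1) % L.length, Nat.mod_lt _ (length_pos_iff.mpr hL)⟩).1) :
    IsCyclicallyAlternating L := by
  have hpos := length_pos_iff.mpr hL
  refine ⟨isChain_iff_getElem.mpr fun k hk => ?_, fun x hx y hy => ?_⟩
  · simpa [Nat.mod_eq_of_lt hk] using h ⟨k, by omega⟩
  · rw [getLast?_eq_getElem?, getElem?_eq_getElem (by omega), Option.mem_some_iff] at hx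
    rw [head?_eq_getElem?, getElem?_eq_getElem hpos, Option.mem_some_iff] at hy
    subst hx hy
    simpa [Nat.sub_add_cancel hpos] using h ⟨L.length - 1, by omega⟩

namespace IsCyclicallyAlternating

variable {L : List (α × Bool)}

theorem isCyclicallyReduced (h : IsCyclicallyAlternating L) : IsCyclicallyReduced L :=
  ⟨h.1.imp fun _ _ hne heq => absurd heq hne, fun x hx y hy heq => absurd heq (h.2 x hx y hy)⟩

theorem flatten_replicate (h : IsCyclicallyAlternating L) (n : ℕ) :
    IsCyclicallyAlternating (replicate n L).flatten := by
  rcases n with _ | n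
  · simp [IsCyclicallyAlternating]
  rcases L with _ | ⟨x, L⟩
  · simp [IsCyclicallyAlternating]
  refine ⟨isChain_flatten (by simp) |>.mpr ⟨by simpa using h.1, isChain_replicate_of_rel _ h.2⟩,
    fun y hy z hz => ?_⟩
  rw [getLast?_flatten_replicate (h := by simp)] at hy
  rw [head?_flatten_replicate (h := by simp)] at hz
  exact h.2 y hy z hz

end IsCyclicallyAlternating

section Pumping

variable [DecidableEq α]

theorem toWord_pow_of_isCyclicallyReduced {g : FreeGroup α}
    (hg : IsCyclicallyReduced g.toWord) (n : ℕ) :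
    (g ^ n).toWord = (replicate n g.toWord).flatten := by
  rw [toWord_pow, (hg.flatten_replicate n).isReduced.reduce_eq]

theorem conj_pow_notMem_of_norm_le_mul_sameGenPairs {H : Subgroup (FreeGroup α)} (K : ℕ)
    (hH : ∀ w ∈ H, norm w ≤ K * sameGenPairs w.toWord) {g : FreeGroup α}
    (hg : IsCyclicallyAlternating g.toWord) (hg1 : g ≠ 1) {v : ℕ} (hv : v ≠ 0)
    (h : FreeGroup α) : h * g ^ v * h⁻¹ ∉ H := by
  intro hmem
  set C := sameGenPairs h.toWord + sameGenPairs h⁻¹.toWord + 2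
  set n := K * C + 2 * norm h + 1
  set w := h * g ^ (v * n) * h⁻¹
  have hw : w ∈ H := by
    rw [show w = (h * g ^ v * h⁻¹) ^ n by rw [conj_pow, ← pow_mul]]
    exact pow_mem hmem n
  have hgvn : (g ^ (v * n)).toWord = (replicate (v * n) g.toWord).flatten :=
    toWord_pow_of_isCyclicallyReduced hg.isCyclicallyReduced _
  have hupper : sameGenPairs w.toWord ≤ C := by
    have h₁ : sameGenPairs w.toWord ≤ _ := sameGenPairs_toWord_mul_le (h * g ^ (v * n)) h⁻¹
    have h₂ := sameGenPairs_toWord_mul_le h (g ^ (v * n))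
    rw [hgvn, sameGenPairs_eq_zero_of_isChain (hg.flatten_replicate _).1] at h₂
    omega
  have hlower : v * n * norm g ≤ norm h + norm w + norm h := by
    have hnorm : norm (g ^ (v * n)) = v * n * norm g := by
      simp [norm, hgvn, sum_replicate]
    calc v * n * norm g = norm (h⁻¹ * w * h) := by rw [← hnorm]; simp [w, mul_assoc]
      _ ≤ norm h + norm w + norm h := by
        grw [norm_mul_le, norm_mul_le, norm_inv_eq]
  have hn : n ≤ v * n * norm g := by
    have : 0 < v * norm g := Nat.mul_pos (Nat.pos_of_ne_zero hv)
      (Nat.pos_of_ne_zero (norm_eq_zero.not.mpr hg1))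
    nlinarith
  have hbound : norm w ≤ K * C := (hH w hw).trans (Nat.mul_le_mul_left K hupper)
  omega

end Pumping

theorem mk_flatMap {β : Type*} (L : List β) (f : β → List (α × Bool)) :
    mk (L.flatMap f) = (L.map (mk ∘ f)).prod := by
  induction L with
  | nil => rfl
  | cons x L ih => rw [flatMap_cons, ← mul_mk, ih, map_cons, prod_cons, Function.comp_apply]

section Reduction

variable [DecidableEq α]

theorem toWord_mk_mul_of_isReduced {L : List (α × Bool)} {u : FreeGroup α}
    (h : IsReduced (L ++ u.toWord)) : (mk L * u).toWord = L ++ u.toWord := by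
  conv_lhs => rw [← mk_toWord (x := u)]
  rw [mul_mk, toWord_mk, h.reduce_eq]

theorem toWord_mk_concat_mul_of_cancel {L N : List (α × Bool)} {x : α} {b : Bool}
    {u : FreeGroup α} (hu : u.toWord = (x, !b) :: N) (h : IsReduced (L ++ N)) :
    (mk (L ++ [(x, b)]) * u).toWord = L ++ N := by
  rw [← mk_toWord (x := u), hu, mul_mk, toWord_mk, append_assoc, singleton_append,
    reduce.Step.eq Red.Step.not, h.reduce_eq]

end Reduction

section Pieces

variable (i j : α) (P Q : ℕ)

/-- The letters `(false, true)` and `(true, true)` of `FreeGroup Bool` stand for `x = i ^ P` and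
`y = j ^ Q * i⁻¹`; `piece` is the reduced word of the corresponding power `x^±1` or `y^±1`. -/
def piece : Bool × Bool → List (α × Bool)
  | (false, true) => replicate P (i, true)
  | (false, false) => replicate P (i, false)
  | (true, true) => replicate Q (j, true) ++ [(i, false)]
  | (true, false) => (i, true) :: replicate Q (j, false)

/-- The first two letters of `piece c`; every reduced word of `⟨x, y⟩` whose expression in `x, y`
starts with `c` starts with them, since at most one letter cancels between consecutive pieces. -/
def lead : Bool × Bool → List (α × Bool)
  | (false, true) => [(i, true), (i, true)]
  | (false, false) => [(i, false), (i, false)]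
  | (true, true) => [(j, true), (j, true)]
  | (true, false) => [(i, true), (j, false)]

theorem lift_eq_mk_flatMap_piece (u : FreeGroup Bool) :
    lift (fun c => cond c (of j ^ Q * (of i)⁻¹) (of i ^ P)) u =
      mk (u.toWord.flatMap (piece i j P Q)) := by
  conv_lhs => rw [← mk_toWord (x := u)]
  rw [lift_mk, mk_flatMap]
  congr 1
  refine map_congr_left fun c _ => ?_
  rcases c with ⟨_ | _, _ | _⟩ <;>
    simp [piece, of, pow_mk, inv_mk, invRev, mul_mk]

variable {i j P Q}

theorem isReduced_piece (hij : i ≠ j) (c : Bool × Bool) : IsReduced (piece i j P Q c) := by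
  have hrep (n : ℕ) (x : α × Bool) : IsReduced (replicate n x) :=
    isChain_replicate_of_rel n fun _ => rfl
  rcases c with ⟨_ | _, _ | _⟩
  · exact hrep P _
  · exact hrep P _
  · exact isChain_cons.mpr ⟨by simp [head?_replicate, hij], hrep Q _⟩
  · refine isChain_append.mpr ⟨hrep Q _, .singleton _, ?_⟩
    simp [getLast?_replicate, hij.symm]

theorem lead_prefix_piece (hP : 2 ≤ P) (hQ : 2 ≤ Q) (c : Bool × Bool) :
    lead i j c <+: piece i j P Q c := by
  obtain ⟨P, rfl⟩ := Nat.exists_eq_add_of_le hP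
  obtain ⟨Q, rfl⟩ := Nat.exists_eq_add_of_le hQ
  rcases c with ⟨_ | _, _ | _⟩ <;>
    simp [lead, piece, Nat.add_comm 2, replicate_succ]

variable [DecidableEq α]

theorem length_piece_le (hij : i ≠ j) (hP : 2 ≤ P) (hQ : 3 ≤ Q) (c : Bool × Bool) :
    (piece i j P Q c).length ≤ 2 * sameGenPairs (piece i j P Q c) := by
  rcases c with ⟨_ | _, _ | _⟩
  · simp only [piece, length_replicate, sameGenPairs_replicate]; omega
  · simp only [piece, length_replicate, sameGenPairs_replicate]; omega
  · rw [piece, ← singleton_append, sameGenPairs_append_of_ne (by simp [head?_replicate, hij])]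
    simp [sameGenPairs_replicate]; omega
  · rw [piece, sameGenPairs_append_of_ne (by simp [getLast?_replicate, hij.symm])]
    simp [sameGenPairs_replicate]; omega

variable (i j) in
def LeadBounded (c : Bool × Bool) (w : FreeGroup α) : Prop :=
  lead i j c <+: w.toWord ∧ norm w ≤ 2 * sameGenPairs w.toWord

theorem LeadBounded.piece_mul_of_isReduced (hij : i ≠ j) (hP : 2 ≤ P) (hQ : 3 ≤ Q)
    {c : Bool × Bool} {u : FreeGroup α} (hu : norm u ≤ 2 * sameGenPairs u.toWord)
    (hred : IsReduced (piece i j P Q c ++ u.toWord)) :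
    LeadBounded i j c (mk (piece i j P Q c) * u) := by
  rw [LeadBounded, norm, toWord_mk_mul_of_isReduced hred, length_append]
  refine ⟨(lead_prefix_piece hP (by omega) c).trans (prefix_append _ _), ?_⟩
  have := length_piece_le hij hP hQ c
  have := sameGenPairs_add_le_append (piece i j P Q c) u.toWord
  rw [norm] at hu
  omega

/-- `y * x = j ^ Q * i ^ (P - 1)`: one letter cancels. -/
theorem LeadBounded.y_mul (hij : i ≠ j) (hQ : 3 ≤ Q) {u : FreeGroup α}
    (hu : LeadBounded i j (false, true) u) :
    LeadBounded i j (true, true) (mk (piece i j P Q (true, true)) * u) := by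
  obtain ⟨⟨t, ht⟩, hlen⟩ := hu
  replace ht : u.toWord = (i, true) :: (i, true) :: t := ht.symm
  have hred : IsReduced (replicate Q (j, true) ++ (i, true) :: t) := by
    refine isChain_append.mpr ⟨isChain_replicate_of_rel _ fun _ => rfl,
      (isReduced_toWord (x := u)).infix ⟨[(i, true)], [], by simp [ht]⟩, ?_⟩
    simp [getLast?_replicate, hij.symm]
  rw [LeadBounded, norm, piece, toWord_mk_concat_mul_of_cancel (b := false) ht hred]
  rw [norm, ht] at hlen
  rw [sameGenPairs_append_of_ne (by simp [getLast?_replicate, hij.symm])]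
  obtain ⟨Q, rfl⟩ := Nat.exists_eq_add_of_le' hQ
  refine ⟨by simp [lead, replicate_succ], ?_⟩
  simp only [length_append, length_replicate, sameGenPairs_replicate, length_cons,
    sameGenPairs_cons_cons, if_true] at hlen ⊢
  omega

/-- `x⁻¹ * y⁻¹ = i⁻¹ ^ (P - 1) * j⁻¹ ^ Q`: one letter cancels. -/
theorem LeadBounded.xinv_mul (hij : i ≠ j) (hP : 3 ≤ P) {u : FreeGroup α}
    (hu : LeadBounded i j (true, false) u) :
    LeadBounded i j (false, false) (mk (piece i j P Q (false, false)) * u) := by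
  obtain ⟨⟨t, ht⟩, hlen⟩ := hu
  replace ht : u.toWord = (i, true) :: (j, false) :: t := ht.symm
  obtain ⟨P, rfl⟩ := Nat.exists_eq_add_of_le' hP
  have hred : IsReduced (replicate (P + 2) (i, false) ++ (j, false) :: t) := by
    refine isChain_append.mpr ⟨isChain_replicate_of_rel _ fun _ => rfl,
      (isReduced_toWord (x := u)).infix ⟨[(i, true)], [], by simp [ht]⟩, ?_⟩
    simp [getLast?_replicate, hij]
  rw [LeadBounded, norm, piece, show P + 3 = (P + 2) + 1 from rfl, replicate_succ',
    toWord_mk_concat_mul_of_cancel (b := false) ht hred]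
  rw [norm, ht] at hlen
  rw [sameGenPairs_append_of_ne (by simp [getLast?_replicate, hij])]
  refine ⟨by simp [lead, replicate_succ], ?_⟩
  simp only [length_append, length_replicate, sameGenPairs_replicate, length_cons,
    sameGenPairs_cons_cons, hij, if_false] at hlen ⊢
  omega

theorem LeadBounded.piece_mul (hij : i ≠ j) (hP : 3 ≤ P) (hQ : 3 ≤ Q) {c c' : Bool × Bool}
    (hcc' : c.1 = c'.1 → c.2 = c'.2) {u : FreeGroup α} (hu : LeadBounded i j c' u) :
    LeadBounded i j c (mk (piece i j P Q c) * u) := by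
  obtain ⟨⟨t, ht⟩, hlen⟩ := hu
  have hred : IsReduced (lead i j c' ++ t) := ht ▸ isReduced_toWord
  rcases c with ⟨_ | _, _ | _⟩ <;> rcases c' with ⟨_ | _, _ | _⟩
  all_goals first
    | exact absurd (hcc' rfl) (by decide)
    | exact LeadBounded.y_mul hij hQ ⟨⟨t, ht⟩, hlen⟩
    | exact LeadBounded.xinv_mul hij hP ⟨⟨t, ht⟩, hlen⟩
    | refine LeadBounded.piece_mul_of_isReduced hij (by omega) hQ hlen ?_
      rw [← ht]
      refine isChain_append.mpr ⟨isReduced_piece hij _, hred, ?_⟩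
      simp [piece, lead, getLast?_cons, getLast?_replicate, hij, hij.symm, show P ≠ 0 by omega,
        show Q ≠ 0 by omega]

theorem leadBounded_mk_flatMap_piece (hij : i ≠ j) (hP : 3 ≤ P) (hQ : 3 ≤ Q) :
    ∀ (c : Bool × Bool) (M : List (Bool × Bool)), IsReduced (c :: M) →
      LeadBounded i j c (mk ((c :: M).flatMap (piece i j P Q)))
  | c, [], _ => by
    simpa using LeadBounded.piece_mul_of_isReduced hij (by omega) hQ (u := 1) (by simp [norm])
      (by simpa using isReduced_piece hij c)
  | c, c' :: M, hM => by
    rw [flatMap_cons, ← mul_mk]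
    exact (leadBounded_mk_flatMap_piece hij hP hQ c' M (hM.infix (suffix_cons c _).isInfix)
      ).piece_mul hij hP hQ (isReduced_cons_cons.mp hM).1

end Pieces

theorem norm_le_two_mul_sameGenPairs_of_mem_closure [DecidableEq α] {i j : α} (hij : i ≠ j)
    {P Q : ℕ} (hP : 3 ≤ P) (hQ : 3 ≤ Q) {w : FreeGroup α}
    (hw : w ∈ Subgroup.closure {of i ^ P, of j ^ Q * (of i)⁻¹}) :
    norm w ≤ 2 * sameGenPairs w.toWord := by
  have : w ∈ (lift fun c => cond c (of j ^ Q * (of i)⁻¹) (of i ^ P)).range := by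
    rw [range_lift_eq_closure]
    convert hw using 2
    ext
    simp
  obtain ⟨u, rfl⟩ := this
  rw [lift_eq_mk_flatMap_piece]
  cases hu : u.toWord with
  | nil => simp [norm]
  | cons c M => exact (leadBounded_mk_flatMap_piece hij hP hQ c M (hu ▸ isReduced_toWord)).2

end FreeGroup

/-- Let `p, q ≥ 2` and let `g` have nonempty reduced word in which (cyclically) consecutive
letters always involve distinct generators. Then for every `v ≥ 1`, no conjugate of `g ^ v`
lies in `H₀` or in `H₁`. -/
theorem stmt_14 (p q : ℤ) (hp : 2 ≤ p) (hq : 2 ≤ q) (g : FreeGroup (Fin 2))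
    (hne : g.toWord ≠ [])
    (hcyc : ∀ i : Fin g.toWord.length,
      (g.toWord.get i).1 ≠
        (g.toWord.get ⟨(i.val + 1) % g.toWord.length,
          Nat.mod_lt _ (List.length_pos_iff.mpr hne)⟩).1)
    (v : ℤ) (hv : 1 ≤ v) (h : FreeGroup (Fin 2)) :
    h * g ^ v * h⁻¹ ∉ H₀ p q ∧ h * g ^ v * h⁻¹ ∉ H₁ p q := by
  lift v to ℕ using by omega
  have key {i j : Fin 2} (hij : i ≠ j) {P Q : ℕ} (hP : 3 ≤ P) (hQ : 3 ≤ Q) :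
      h * g ^ v * h⁻¹ ∉ Subgroup.closure {.of i ^ P, .of j ^ Q * (FreeGroup.of i)⁻¹} :=
    FreeGroup.conj_pow_notMem_of_norm_le_mul_sameGenPairs 2
      (fun _ => FreeGroup.norm_le_two_mul_sameGenPairs_of_mem_closure hij hP hQ)
      (FreeGroup.isCyclicallyAlternating_of_forall_get hne hcyc) (fun h1 => hne (by simp [h1]))
      (by omega) h
  have hpow {n : ℤ} (hn : 0 ≤ n) (x : FreeGroup (Fin 2)) : x ^ n = x ^ n.toNat := by
    rw [← zpow_natCast, Int.toNat_of_nonneg hn]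
  rw [zpow_natCast, H₀, H₁, hpow (by omega : 0 ≤ p + 1), hpow (by omega : 0 ≤ q + 1),
    Set.pair_comm (a ^ _ * _)]
  exact ⟨key (by decide) (by omega) (by omega), key (by decide) (by omega) (by omega)⟩
end

section
/- For all integers p, q ≥ 2 and v ≥ 1, no conjugate of (b·a·b⁻¹·a⁻¹)^v in F₂ lies in H₀, and no conjugate of (b·a·b⁻¹·a⁻¹)^v lies in H₁; that is, for every h ∈ F₂, the element h·(b·a·b⁻¹·a⁻¹)^v·h⁻¹ belongs to neither H₀ nor H₁. -/
/-!
Send `a` and `b` to rotations of `ℂ` of orders `p + 1` and `q + 1` about the distinct centres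
`0` and `1`. The commutator `b a b⁻¹ a⁻¹` then acts as a nonzero translation, so no conjugate of
a nontrivial power of it fixes a point of `ℂ`. On the other hand the generators of `H₀` act
trivially or as a power of the rotation about `0`, so `H₀` fixes `0`; likewise `H₁` fixes `1`.
-/

open MulAction

section Conjugation

variable {G X : Type*} [Group G] [MulAction G X]

theorem conj_smul_ne_self {g : G} (hg : ∀ y : X, g • y ≠ y) (h : G) (x : X) :
    (h * g * h⁻¹) • x ≠ x := by
  rw [mul_smul, mul_smul, ← eq_inv_smul_iff.ne]
  exact hg _

theorem conj_notMem_of_le_comap_stabilizer {K : Type*} [Group K] (φ : K →* G) {H : Subgroup K}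
    {x : X} (hH : H ≤ (stabilizer G x).comap φ) {g : K} (hg : ∀ y : X, φ g • y ≠ y) (h : K) :
    h * g * h⁻¹ ∉ H := fun hmem ↦ by
  have hfix := hH hmem
  rw [Subgroup.mem_comap, mem_stabilizer_iff, map_mul, map_mul, map_inv] at hfix
  exact conj_smul_ne_self hg (φ h) x hfix

end Conjugation

namespace AffineEquiv

variable {k V P : Type*} [AddCommGroup V] [AddTorsor V P]

section Ring

variable [Ring k] [Module k V]

instance applyMulAction : MulAction (P ≃ᵃ[k] P) P where
  smul e x := e x
  one_smul _ := rfl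
  mul_smul _ _ _ := rfl

theorem constVAdd_smul_ne_self {v : V} (hv : v ≠ 0) (x : P) : constVAdd k P v • x ≠ x :=
  fun hx ↦ hv (vadd_right_cancel x (hx.trans (zero_vadd V x).symm))

end Ring

section CommRing

variable [CommRing k] [Module k V]

theorem homothetyUnitsMulHom_smul_self (c : P) (r : kˣ) :
    homothetyUnitsMulHom c r • c = c :=
  AffineMap.homothety_apply_same c (r : k)

theorem homothetyUnitsMulHom_commutator (c d : P) (r s : kˣ) :
    homothetyUnitsMulHom c r * homothetyUnitsMulHom d s * (homothetyUnitsMulHom c r)⁻¹ *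
      (homothetyUnitsMulHom d s)⁻¹ = constVAdd k P (((1 - r) * (1 - s) : k) • (c -ᵥ d)) := by
  ext x
  simp only [← map_inv, coe_mul, Function.comp_apply, coe_homothetyUnitsMulHom_apply,
    AffineMap.homothety_apply, constVAdd_apply, vadd_vsub_assoc]
  conv_rhs => rw [← vsub_vadd x c]
  rw [vadd_vadd, ← vsub_add_vsub_cancel x d c, ← neg_vsub_eq_vsub_rev d c]
  congr 1
  linear_combination (norm := module)
    r.mul_inv • ((↑s * ↑s⁻¹ : k) • (x -ᵥ d) + (s : k) • (d -ᵥ c)) + s.mul_inv • (x -ᵥ d)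

end CommRing

end AffineEquiv

theorem Complex.exists_unit_ne_one_zpow_eq_one {n : ℤ} (hn : 1 < n) :
    ∃ ω : ℂˣ, ω ≠ 1 ∧ ω ^ n = 1 := by
  lift n to ℕ using by omega
  have hω := (Complex.isPrimitiveRoot_exp n (by omega)).isUnit_unit (by omega)
  exact ⟨_, hω.ne_one (by omega), by rw [zpow_natCast, hω.pow_eq_one]⟩

section Stabilizers

variable {G X : Type*} [Group G] [MulAction G X] (p q : ℤ) {φ : FreeGroup (Fin 2) →* G}

theorem H₀_le_comap_stabilizer (ha : φ a ^ (p + 1) = 1) (hb : φ b ^ (q + 1) = 1) {x : X}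
    (hx : φ a • x = x) : H₀ p q ≤ (stabilizer G x).comap φ := by
  rw [H₀, Subgroup.closure_le, Set.insert_subset_iff, Set.singleton_subset_iff]
  simp only [SetLike.mem_coe, Subgroup.mem_comap, map_mul, map_inv, map_zpow, ha, hb, one_mul]
  exact ⟨one_mem _, inv_mem hx⟩

theorem H₁_le_comap_stabilizer (ha : φ a ^ (p + 1) = 1) (hb : φ b ^ (q + 1) = 1) {x : X}
    (hx : φ b • x = x) : H₁ p q ≤ (stabilizer G x).comap φ := by
  rw [H₁, Subgroup.closure_le, Set.insert_subset_iff, Set.singleton_subset_iff]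
  simp only [SetLike.mem_coe, Subgroup.mem_comap, map_mul, map_inv, map_zpow, ha, hb, one_mul]
  exact ⟨inv_mem hx, one_mem _⟩

end Stabilizers

open AffineEquiv in
/-- For `p, q ≥ 2` and `v ≥ 1`, no conjugate of `(b * a * b⁻¹ * a⁻¹) ^ v` (a power of the word
representing the surgery curve `γ` of Figure 3) lies in `H₀` or in `H₁`. -/
theorem stmt_15 (p q : ℤ) (hp : 2 ≤ p) (hq : 2 ≤ q) (v : ℤ) (hv : 1 ≤ v)
    (h : FreeGroup (Fin 2)) :
    h * (b * a * b⁻¹ * a⁻¹) ^ v * h⁻¹ ∉ H₀ p q ∧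
    h * (b * a * b⁻¹ * a⁻¹) ^ v * h⁻¹ ∉ H₁ p q := by
  obtain ⟨ω, hω, hωp⟩ := Complex.exists_unit_ne_one_zpow_eq_one (n := p + 1) (by omega)
  obtain ⟨ζ, hζ, hζq⟩ := Complex.exists_unit_ne_one_zpow_eq_one (n := q + 1) (by omega)
  let φ : FreeGroup (Fin 2) →* ℂ ≃ᵃ[ℂ] ℂ :=
    FreeGroup.lift ![homothetyUnitsMulHom 0 ω, homothetyUnitsMulHom 1 ζ]
  have hφa : φ a = homothetyUnitsMulHom 0 ω := FreeGroup.lift_apply_of ..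
  have hφb : φ b = homothetyUnitsMulHom 1 ζ := FreeGroup.lift_apply_of ..
  have ha : φ a ^ (p + 1) = 1 := by rw [hφa, ← map_zpow, hωp, map_one]
  have hb : φ b ^ (q + 1) = 1 := by rw [hφb, ← map_zpow, hζq, map_one]
  have hfree : ∀ y : ℂ, φ ((b * a * b⁻¹ * a⁻¹) ^ v) • y ≠ y := by
    simp only [map_zpow, map_mul, map_inv, hφa, hφb, homothetyUnitsMulHom_commutator,
      ← constVAdd_zsmul]
    refine constVAdd_smul_ne_self ?_
    simp only [ne_eq, smul_eq_zero, mul_eq_zero, sub_eq_zero, vsub_eq_sub, sub_zero,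
      eq_comm (a := (1 : ℂ)), Units.val_eq_one, hω, hζ, zero_ne_one, or_self, or_false]
    omega
  exact ⟨conj_notMem_of_le_comap_stabilizer φ
      (H₀_le_comap_stabilizer p q ha hb (hφa ▸ homothetyUnitsMulHom_smul_self 0 ω)) hfree h,
    conj_notMem_of_le_comap_stabilizer φ
      (H₁_le_comap_stabilizer p q ha hb (hφb ▸ homothetyUnitsMulHom_smul_self 1 ζ)) hfree h⟩
end
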